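/- arXiv:2005.05661 — 2 statements merged into one kernel-verified Lean document; each statement's English description precedes it below -/
import Mathlib

section
/- Abstract version of Lemma 3.5: with discrete forms m_h, a_h on V and inconsistency functionals ε_m(v,w) = (v,w) - m_h(v,w), ε_a(v,w) = a(v,w) - a_h(v,w), the elliptic reconstruction R_m v (built with data f^m) satisfies a(v - R_m v, w) = ε_a(v, w) + ε_m(ℒ_h v + P_h f^m, w) for all w ∈ V, where ℒ_h : V → V satisfies -m_h(ℒ_h v, w) = a_h(v, w) for w ∈ V, P_h f^m ∈ V satisfies m_h(P_h f^m, w) = (f^m, w) for all w ∈ V, and R_m v ∈ H satisfies a(R_m v, φ) = -(ℒ_h v + (P_h - I) f^m, φ) for all φ ∈ H. -/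
open scoped RealInnerProductSpace

/-- abstract elliptic reconstruction inconsistency identity (Lemma 3.5):
`a(v - R_m v, w) = ε_a(v,w) + ε_m(ℒ_h v + P_h f, w)` for all `w ∈ V`, where
`ε_m(x,w) = (x,w) - m_h(x,w)` and `ε_a(v,w) = a(v,w) - a_h(v,w)`. -/
theorem stmt8 {H : Type*} [NormedAddCommGroup H] [InnerProductSpace ℝ H]
    (V : Submodule ℝ H)
    (a : H →ₗ[ℝ] H →ₗ[ℝ] ℝ)
    (mh ah : V →ₗ[ℝ] V →ₗ[ℝ] ℝ)
    (f : H) (v : V) (Lv Pf : V) (Rm : H)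
    (hL : ∀ w : V, -(mh Lv w) = ah v w)
    (hP : ∀ w : V, mh Pf w = ⟪f, (w : H)⟫)
    (hR : ∀ φ : H, a Rm φ = -⟪((Lv : H) + (Pf : H) - f), φ⟫) :
    ∀ w : V, a ((v : H) - Rm) (w : H) =
      (a (v : H) (w : H) - ah v w) +
        (⟪((Lv : H) + (Pf : H)), (w : H)⟫ - mh (Lv + Pf) w) := by
  intro w
  calc a ((v : H) - Rm) (w : H) = a (v : H) (w : H) - a Rm (w : H) := by
        rw [map_sub, LinearMap.sub_apply]
    _ = a (v : H) (w : H) + ⟪(Lv : H) + (Pf : H), (w : H)⟫ - ⟪f, (w : H)⟫ := by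
        rw [hR, inner_sub_left]
        ring
    _ = (a (v : H) (w : H) - ah v w) +
          (⟪(Lv : H) + (Pf : H), (w : H)⟫ - mh (Lv + Pf) w) := by
        rw [map_add, LinearMap.add_apply, hP, ← hL]
        ring
end

section
/- Property of the elliptic transfer operator: with the elliptic transfer operator Ť : V^{n-1} → V^n of Definition 4.5 (in the consistent Hilbert-space setting), the discrete operators satisfy ℒ^n (Ť v) = P^n_{L²}(ℒ^{n-1} v) for all v ∈ V^{n-1}, where P^n_{L²} is the (·,·)-orthogonal projection onto V^n and ℒ^j : V^j → V^j is defined by -(ℒ^j v, w) = a(v, w) for all w ∈ V^j. Consequently Ť v is obtained by solving a single discrete elliptic problem, and Ť v = v whenever V^n = V^{n-1}. -/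
open scoped RealInnerProductSpace

/-!
Testing the defining relation of `Ť` against `w ∈ Vⁿ` and unfolding both elliptic reconstructions
gives `⟪ℒⁿ (Ť v), w⟫ = ⟪ℒⁿ⁻¹ v, w⟫` for all `w ∈ Vⁿ`; since `ℒⁿ (Ť v) ∈ Vⁿ`, this is the
characterization of the orthogonal projection of `ℒⁿ⁻¹ v`. When `Vⁿ = Vⁿ⁻¹`, the same identity
together with the definitions of `ℒⁿ` and `ℒⁿ⁻¹` gives `a(Ť v - v, w) = 0` on `Vⁿ`, and testing
with `w = Ť v - v` and using coercivity forces `Ť v = v`.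
-/

theorem Submodule.starProjection_eq_of_mem_of_inner_eq {𝕜 E : Type*} [RCLike 𝕜]
    [NormedAddCommGroup E] [InnerProductSpace 𝕜 E] {K : Submodule 𝕜 E}
    [K.HasOrthogonalProjection] {x y : E} (hx : x ∈ K)
    (h : ∀ w ∈ K, inner 𝕜 x w = inner 𝕜 y w) : K.starProjection y = x :=
  K.eq_starProjection_of_mem_of_inner_eq_zero hx fun w hw => by
    rw [inner_sub_left, h w hw, sub_self]

theorem eq_zero_of_coercive {E : Type*} [NormedAddCommGroup E] (a : E → E → ℝ) {c : ℝ}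
    (hc : 0 < c) (hcoer : ∀ v, c * ‖v‖ ^ 2 ≤ a v v) {u : E} (hu : a u u = 0) : u = 0 := by
  have hsq : ‖u‖ ^ 2 ≤ 0 := by
    have := hcoer u
    rw [hu] at this
    exact nonpos_of_mul_nonpos_right this hc
  exact norm_eq_zero.mp (pow_eq_zero_iff two_ne_zero |>.mp (le_antisymm hsq (sq_nonneg _)))

theorem stmt14_general {H : Type*} [NormedAddCommGroup H] [InnerProductSpace ℝ H]
    (a : H →ₗ[ℝ] H →ₗ[ℝ] ℝ)
    (c : ℝ) (hc : 0 < c) (hcoer : ∀ v : H, c * ‖v‖ ^ 2 ≤ a v v)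
    (V₁ V₂ : Submodule ℝ H) [FiniteDimensional ℝ V₂]
    (L₁ : V₁ → V₁) (L₂ : V₂ → V₂) (R₁ : V₁ → H) (R₂ : V₂ → H) (T : V₁ → V₂)
    (hL₁ : ∀ v w : V₁, -⟪((L₁ v : V₁) : H), (w : H)⟫ = a (v : H) (w : H))
    (hL₂ : ∀ v w : V₂, -⟪((L₂ v : V₂) : H), (w : H)⟫ = a (v : H) (w : H))
    (hR₁ : ∀ (v : V₁) (φ : H), a (R₁ v) φ = -⟪((L₁ v : V₁) : H), φ⟫)
    (hR₂ : ∀ (v : V₂) (φ : H), a (R₂ v) φ = -⟪((L₂ v : V₂) : H), φ⟫)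
    (hT : ∀ (u : V₁) (w : V₂), a (R₂ (T u)) (w : H) = a (R₁ u) (w : H)) :
    ∀ v : V₁,
      ((L₂ (T v) : V₂) : H) = (Submodule.orthogonalProjectionOnto V₂ ((L₁ v : V₁) : H) : H) ∧
      (∀ hv : (v : H) ∈ V₂, V₁ = V₂ → ((T v : V₂) : H) = (v : H)) := by
  intro v
  have hinner : ∀ w : V₂, ⟪((L₂ (T v) : V₂) : H), (w : H)⟫ = ⟪((L₁ v : V₁) : H), (w : H)⟫ := by
    intro w
    have := hT v w
    rwa [hR₂, hR₁, neg_inj] at this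
  refine ⟨(V₂.starProjection_eq_of_mem_of_inner_eq (L₂ (T v)).2
    fun w hw => hinner ⟨w, hw⟩).symm, fun hv hV => ?_⟩
  have hgalerkin : ∀ w : V₂, a (((T v : V₂) : H) - (v : H)) (w : H) = 0 := by
    intro w
    rw [map_sub, LinearMap.sub_apply, ← hL₂, ← hL₁ v ⟨w, hV ▸ w.2⟩, Submodule.coe_mk, hinner,
      sub_self]
  exact sub_eq_zero.mp <| eq_zero_of_coercive (a · ·) hc hcoer
    (hgalerkin ⟨_, sub_mem (T v).2 hv⟩)

/-- the elliptic transfer operator `Ť` satisfies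
`ℒⁿ(Ť v) = P^n_{L²}(ℒ^{n-1} v)` (projection of the discrete Laplacian), and `Ť v = v`
whenever `V^n = V^{n-1}`. -/
theorem stmt14 {H : Type*} [NormedAddCommGroup H] [InnerProductSpace ℝ H] [CompleteSpace H]
    (a : H →ₗ[ℝ] H →ₗ[ℝ] ℝ)
    (hsymm : ∀ v w : H, a v w = a w v)
    (c : ℝ) (hc : 0 < c) (hcoer : ∀ v : H, c * ‖v‖ ^ 2 ≤ a v v)
    (V₁ V₂ : Submodule ℝ H) [FiniteDimensional ℝ V₁] [FiniteDimensional ℝ V₂]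
    (L₁ : V₁ → V₁) (L₂ : V₂ → V₂) (R₁ : V₁ → H) (R₂ : V₂ → H) (T : V₁ → V₂)
    (hL₁ : ∀ v w : V₁, -⟪((L₁ v : V₁) : H), (w : H)⟫ = a (v : H) (w : H))
    (hL₂ : ∀ v w : V₂, -⟪((L₂ v : V₂) : H), (w : H)⟫ = a (v : H) (w : H))
    (hR₁ : ∀ (v : V₁) (φ : H), a (R₁ v) φ = -⟪((L₁ v : V₁) : H), φ⟫)
    (hR₂ : ∀ (v : V₂) (φ : H), a (R₂ v) φ = -⟪((L₂ v : V₂) : H), φ⟫)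
    (hT : ∀ (u : V₁) (w : V₂), a (R₂ (T u)) (w : H) = a (R₁ u) (w : H)) :
    ∀ v : V₁,
      ((L₂ (T v) : V₂) : H) = (Submodule.orthogonalProjectionOnto V₂ ((L₁ v : V₁) : H) : H) ∧
      (∀ hv : (v : H) ∈ V₂, V₁ = V₂ → ((T v : V₂) : H) = (v : H)) :=
  stmt14_general a c hc hcoer V₁ V₂ L₁ L₂ R₁ R₂ T hL₁ hL₂ hR₁ hR₂ hT
end
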